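/- If A ≡ 0, then the only bounded solution ψ of ψ'' - W''(q(z))·ψ = 0 with ψ(0) = 0 is ψ ≡ 0; hence ψ is a constant multiple of q' and the condition ψ(0)=0 forces the constant to be zero. -/

import Mathlib

open Real

noncomputable def q (z : ℝ) : ℝ := (1 - Real.tanh z) / 2

/-- W''(s) for W(s) = (1/2)s²(1-s)². -/
noncomputable def Wpp (s : ℝ) : ℝ := 6*s^2 - 6*s + 1

/-!
The potential `V = Wpp ∘ q = 1 - (3/2) sech²` is even, so it suffices to treat `z ≥ 0`. There
`w = (1 + sinh) / √cosh` is positive with `w'' ≤ V w` and `w² ≥ cosh`. With `y = w'/w`, Picone's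
identity `(ψψ' - yψ²)' = (ψ' - yψ)² + (V - y' - y²)ψ²` and `ψ(0) = 0` give `ψψ' ≥ yψ²` on `[0, ∞)`,
i.e. `(ψ/w)²` is nondecreasing there. A bounded `ψ` has `(ψ/w)² → 0`, so `ψ = 0`.
-/

open Set Filter Topology

section Picone

variable {V ψ ψ' y y' u : ℝ → ℝ} {a : ℝ}

theorem hasDerivAt_picone {x : ℝ} (hψ : HasDerivAt ψ (ψ' x) x)
    (hψ' : HasDerivAt ψ' (V x * ψ x) x) (hy : HasDerivAt y (y' x) x) :
    HasDerivAt (fun t => ψ t * ψ' t - y t * ψ t ^ 2)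
      ((ψ' x - y x * ψ x) ^ 2 + (V x - (y' x + y x ^ 2)) * ψ x ^ 2) x := by
  refine ((hψ.mul hψ').sub (hy.mul (hψ.fun_pow 2))).congr_deriv ?_
  ring

theorem picone_nonneg (hψ : ∀ x ∈ Ici a, HasDerivAt ψ (ψ' x) x)
    (hψ' : ∀ x ∈ Ici a, HasDerivAt ψ' (V x * ψ x) x) (hy : ∀ x ∈ Ici a, HasDerivAt y (y' x) x)
    (hric : ∀ x ∈ Ici a, y' x + y x ^ 2 ≤ V x) (ha : ψ a = 0) {x : ℝ} (hx : a ≤ x) :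
    0 ≤ ψ x * ψ' x - y x * ψ x ^ 2 := by
  have hP : ∀ t ∈ Ici a, HasDerivAt (fun t => ψ t * ψ' t - y t * ψ t ^ 2) _ t := fun t ht =>
    hasDerivAt_picone (hψ t ht) (hψ' t ht) (hy t ht)
  have hmono := monotoneOn_of_hasDerivWithinAt_nonneg (convex_Ici a)
    (fun t ht => (hP t ht).continuousAt.continuousWithinAt)
    (fun t ht => (hP t (interior_subset ht)).hasDerivWithinAt)
    (fun t ht => by
      have := sub_nonneg.2 (hric t (interior_subset ht))
      positivity)
  simpa [ha] using hmono self_mem_Ici hx hx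

theorem monotoneOn_sq_div (hψ : ∀ x ∈ Ici a, HasDerivAt ψ (ψ' x) x)
    (hψ' : ∀ x ∈ Ici a, HasDerivAt ψ' (V x * ψ x) x) (hy : ∀ x ∈ Ici a, HasDerivAt y (y' x) x)
    (hric : ∀ x ∈ Ici a, y' x + y x ^ 2 ≤ V x) (hu : ∀ x ∈ Ici a, HasDerivAt u (2 * y x * u x) x)
    (hu_pos : ∀ x ∈ Ici a, 0 < u x) (ha : ψ a = 0) :
    MonotoneOn (fun x => ψ x ^ 2 / u x) (Ici a) := by
  have hg : ∀ x ∈ Ici a, HasDerivAt (fun x => ψ x ^ 2 / u x)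
      (2 * (ψ x * ψ' x - y x * ψ x ^ 2) / u x) x := fun x hx => by
    refine (((hψ x hx).fun_pow 2).div (hu x hx) (hu_pos x hx).ne').congr_deriv ?_
    field_simp
    ring
  refine monotoneOn_of_hasDerivWithinAt_nonneg (convex_Ici a)
    (fun x hx => (hg x hx).continuousAt.continuousWithinAt)
    (fun x hx => (hg x (interior_subset hx)).hasDerivWithinAt) fun x hx => ?_
  have hx' : x ∈ Ici a := interior_subset hx
  have := picone_nonneg hψ hψ' hy hric ha hx'
  have := hu_pos x hx'
  positivity

end Picone

theorem Wpp_q (z : ℝ) : Wpp (q z) = (2 * sinh z ^ 2 - 1) / (2 * cosh z ^ 2) := by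
  have := cosh_pos z
  rw [Wpp, q, tanh_eq_sinh_div_cosh]
  field_simp
  linear_combination (-2 : ℝ) * cosh_sq z

theorem Wpp_q_neg (z : ℝ) : Wpp (q (-z)) = Wpp (q z) := by
  simp only [Wpp_q, sinh_neg, cosh_neg, neg_sq]

/-- `supersolSq = w²` and `supersolLogDeriv = w' / w` for `w z = (1 + sinh z) / √(cosh z)`, which
satisfies `w'' = (Wpp (q z) - (3/4) tanh² z) w`: both `1 / √cosh` and `sinh / √cosh` do. -/
noncomputable def supersolSq (z : ℝ) : ℝ := (1 + sinh z) ^ 2 / cosh z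

noncomputable def supersolLogDeriv (z : ℝ) : ℝ := cosh z / (1 + sinh z) - sinh z / (2 * cosh z)

theorem hasDerivAt_supersolLogDeriv {z : ℝ} (hz : 1 + sinh z ≠ 0) :
    HasDerivAt supersolLogDeriv
      (Wpp (q z) - 3 * sinh z ^ 2 / (4 * cosh z ^ 2) - supersolLogDeriv z ^ 2) z := by
  have hc := (cosh_pos z).ne'
  have h1 := (hasDerivAt_cosh z).div ((hasDerivAt_sinh z).const_add 1) hz
  have h2 := (hasDerivAt_sinh z).div ((hasDerivAt_cosh z).const_mul 2) (by positivity)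
  refine (h1.sub h2).congr_deriv ?_
  rw [Wpp_q, supersolLogDeriv]
  field_simp
  linear_combination (-8 * (1 + sinh z) ^ 2) * cosh_sq z

theorem hasDerivAt_supersolSq {z : ℝ} (hz : 1 + sinh z ≠ 0) :
    HasDerivAt supersolSq (2 * supersolLogDeriv z * supersolSq z) z := by
  have hc := (cosh_pos z).ne'
  refine ((((hasDerivAt_sinh z).const_add 1).fun_pow 2).div (hasDerivAt_cosh z) hc).congr_deriv ?_
  rw [supersolLogDeriv, supersolSq]
  field_simp
  ring

theorem cosh_le_supersolSq {z : ℝ} (hz : 0 ≤ z) : cosh z ≤ supersolSq z := by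
  have hs := sinh_nonneg_iff.2 hz
  rw [supersolSq, le_div_iff₀ (cosh_pos z), ← sq, cosh_sq]
  nlinarith

theorem tendsto_supersolSq_atTop : Tendsto supersolSq atTop atTop := by
  refine tendsto_atTop_mono' atTop ?_ (tendsto_exp_atTop.atTop_div_const two_pos)
  filter_upwards [eventually_ge_atTop 0] with z hz
  have : exp z / 2 ≤ cosh z := by rw [cosh_eq]; linarith [exp_pos (-z)]
  exact this.trans (cosh_le_supersolSq hz)

theorem eq_zero_of_abs_le_on_Ici {ψ ψ' : ℝ → ℝ} (hψ : ∀ x, HasDerivAt ψ (ψ' x) x)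
    (hψ' : ∀ x, HasDerivAt ψ' (Wpp (q x) * ψ x) x) {C : ℝ} (hC : ∀ x, 0 ≤ x → |ψ x| ≤ C)
    (h0 : ψ 0 = 0) {z : ℝ} (hz : 0 ≤ z) : ψ z = 0 := by
  have hs : ∀ x ∈ Ici (0 : ℝ), 1 + sinh x ≠ 0 := fun x hx => by
    have := sinh_nonneg_iff.2 hx
    positivity
  have hu_pos : ∀ x ∈ Ici (0 : ℝ), 0 < supersolSq x := fun x hx =>
    (cosh_pos x).trans_le (cosh_le_supersolSq hx)
  have hmono := monotoneOn_sq_div (fun x _ => hψ x) (fun x _ => hψ' x)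
    (fun x hx => hasDerivAt_supersolLogDeriv (hs x hx))
    (fun x _ => by
      have : 0 ≤ 3 * sinh x ^ 2 / (4 * cosh x ^ 2) := by positivity
      linarith)
    (fun x hx => hasDerivAt_supersolSq (hs x hx)) hu_pos h0
  have hdecay : Tendsto (fun x => C ^ 2 * (supersolSq x)⁻¹) atTop (𝓝 0) := by
    simpa using tendsto_supersolSq_atTop.inv_tendsto_atTop.const_mul (C ^ 2)
  have hle : ψ z ^ 2 / supersolSq z ≤ 0 := by
    refine ge_of_tendsto hdecay ?_
    filter_upwards [eventually_ge_atTop z] with x hx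
    have hx0 : 0 ≤ x := hz.trans hx
    calc ψ z ^ 2 / supersolSq z ≤ ψ x ^ 2 / supersolSq x := hmono hz hx0 hx
      _ ≤ C ^ 2 * (supersolSq x)⁻¹ := by
        obtain ⟨hlo, hhi⟩ := abs_le.1 (hC x hx0)
        rw [div_eq_mul_inv]
        exact mul_le_mul_of_nonneg_right (sq_le_sq' hlo hhi) (inv_nonneg.2 (hu_pos x hx0).le)
  have hsq : ψ z ^ 2 ≤ 0 := by simpa using (div_le_iff₀ (hu_pos z hz)).1 hle
  exact pow_eq_zero_iff two_ne_zero |>.1 (le_antisymm hsq (sq_nonneg _))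

theorem stmt_11 (ψ : ℝ → ℝ)
    (hψ : ContDiff ℝ 2 ψ)
    (hbdd : ∃ C, ∀ z, |ψ z| ≤ C)
    (hode : ∀ z, deriv (deriv ψ) z - Wpp (q z) * ψ z = 0)
    (h0 : ψ 0 = 0) :
    ∀ z, ψ z = 0 := by
  obtain ⟨C, hC⟩ := hbdd
  have hψ1 : ∀ x, HasDerivAt ψ (deriv ψ x) x := fun x =>
    (hψ.differentiable (by norm_num) x).hasDerivAt
  have hψ2 : ∀ x, HasDerivAt (deriv ψ) (Wpp (q x) * ψ x) x := fun x => by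
    have hd : ContDiff ℝ 1 (deriv ψ) := ((contDiff_succ_iff_deriv (n := 1)).1 hψ).2.2
    rw [← sub_eq_zero.1 (hode x)]
    exact (hd.differentiable (by norm_num) x).hasDerivAt
  intro z
  rcases le_total 0 z with hz | hz
  · exact eq_zero_of_abs_le_on_Ici hψ1 hψ2 (fun x _ => hC x) h0 hz
  · have hψ1' : ∀ x, HasDerivAt (fun t => ψ (-t)) (-deriv ψ (-x)) x := fun x =>
      ((hψ1 (-x)).comp x (hasDerivAt_neg x)).congr_deriv (by simp)
    have hψ2' : ∀ x, HasDerivAt (fun t => -deriv ψ (-t)) (Wpp (q x) * ψ (-x)) x := fun x =>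
      ((hψ2 (-x)).comp x (hasDerivAt_neg x)).neg.congr_deriv (by simp [Wpp_q_neg])
    simpa using eq_zero_of_abs_le_on_Ici hψ1' hψ2' (fun x _ => hC (-x)) (by simpa) (neg_nonneg.2 hz)
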